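/- Let H_s ∈ C¹ be nondecreasing with consecutive values c^n_{i−1} ≤ c^n_i, and let h₀ ∈ Lip_ρ(Ω) with h₀ ≤ c^n_0 on ∂Ω. Define recursively h^n_{i+1}(x) = min(max(h^n_i(x), c^n_{i+1} − d_Ω⁻(x)), c^n_{i+1} + d_Ω(x)) starting from h^n_0 = h₀. Then for every i, h^n_i(x) = max(h₀(x), c^n_i − d_Ω⁻(x)); i.e. the upper truncation by c^n_i + d_Ω is never active. -/

import Mathlib

/-!
Since `c` is nondecreasing, the lower truncations accumulate to `max h₀ (c i - d_Ω⁻)`, and the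
upper obstacle `c i + d_Ω` stays above this as soon as `h₀ ≤ c 0 + d_Ω` on `Ω̄`. For the latter,
take `x ∈ Ω`, `y ∈ ∂Ω` and the first boundary point `z` on the segment from `x` to `y`. Integrating
along almost every line parallel to `[z, x]` (Rademacher and Fubini), the constraint `∇h₀ ∈ K`
gives `h₀ x - h₀ z ≤ γ_{K⁰}(x - z) ≤ γ_{K⁰}(x - y)`, while `h₀ z ≤ c 0`.
-/

open MeasureTheory Set RealInnerProductSpace
open scoped NNReal

/-- The polar set `K⁰ = {p : ⟪p,x⟫ ≤ 1 ∀ x ∈ K}`. -/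
def polarSet {N : ℕ} (K : Set (EuclideanSpace ℝ (Fin N))) : Set (EuclideanSpace ℝ (Fin N)) :=
  {p | ∀ x ∈ K, ⟪p, x⟫ ≤ 1}

/-- `Ω` is a domain of class `C²`. -/
def IsC2Domain {N : ℕ} (Ω : Set (EuclideanSpace ℝ (Fin N))) : Prop :=
  ∀ x ∈ frontier Ω, ∃ (U : Set (EuclideanSpace ℝ (Fin N))) (f : EuclideanSpace ℝ (Fin N) → ℝ),
    x ∈ U ∧ IsOpen U ∧ ContDiffOn ℝ 2 f U ∧ (∀ y ∈ U, fderivWithin ℝ f U y ≠ 0) ∧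
    Ω ∩ U = {y ∈ U | f y < 0}

/-- The Minkowski distance from `∂Ω` induced by the gauge of `K⁰`. -/
noncomputable def mdist {N : ℕ} (K Ω : Set (EuclideanSpace ℝ (Fin N)))
    (x : EuclideanSpace ℝ (Fin N)) : ℝ :=
  sInf ((fun y => gauge (polarSet K) (x - y)) '' frontier Ω)

/-- The Minkowski distance from `∂Ω` induced by the gauge of `−K⁰`. -/
noncomputable def mdistNeg {N : ℕ} (K Ω : Set (EuclideanSpace ℝ (Fin N)))
    (x : EuclideanSpace ℝ (Fin N)) : ℝ :=
  sInf ((fun y => gauge (polarSet K) (y - x)) '' frontier Ω)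

open Filter Topology

theorem LipschitzOnWith.sub_le_mul_of_ae_deriv_le {g : ℝ → ℝ} {L : ℝ≥0} {a b S : ℝ}
    (hab : a ≤ b) (hg : LipschitzOnWith L g (Icc a b))
    (hderiv : ∀ᵐ t, t ∈ Icc a b → deriv g t ≤ S) : g b - g a ≤ S * (b - a) := by
  have hac := (uIcc_of_le hab ▸ hg).absolutelyContinuousOnInterval
  calc g b - g a = ∫ t in a..b, deriv g t := hac.integral_deriv_eq_sub.symm
    _ ≤ ∫ _ in a..b, S :=
      intervalIntegral.integral_mono_ae_restrict hab hac.intervalIntegrable_deriv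
        intervalIntegrable_const ((ae_restrict_iff' measurableSet_Icc).2 hderiv)
    _ = S * (b - a) := by simp [mul_comm]

theorem le_of_forall_mem_Ioo_le_add_mul {x y k δ : ℝ} (hδ : 0 < δ)
    (h : ∀ r ∈ Ioo 0 δ, x ≤ y + r * k) : x ≤ y := by
  have hlim : Tendsto (fun r => y + r * k) (𝓝[>] 0) (𝓝 y) := by
    simpa using ((by fun_prop : Continuous fun r : ℝ => y + r * k).tendsto 0).mono_left
      nhdsWithin_le_nhds
  exact ge_of_tendsto hlim (eventually_of_mem (Ioo_mem_nhdsGT hδ) h)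

theorem ae_ae_add_smul_notMem {E : Type*} [NormedAddCommGroup E] [NormedSpace ℝ E]
    [MeasurableSpace E] [BorelSpace E] [SecondCountableTopology E] {μ : Measure E} [SFinite μ]
    [μ.IsAddRightInvariant] {B : Set E} (hB : μ B = 0) (v : E) :
    ∀ᵐ w ∂μ, ∀ᵐ t : ℝ, w + t • v ∉ B := by
  have hline : Measurable fun z : E × ℝ => z.1 + z.2 • v := by fun_prop
  have hnull : (μ.prod volume) ((fun z : E × ℝ => z.1 + z.2 • v) ⁻¹' toMeasurable μ B) = 0 := by
    rw [Measure.prod_apply_symm (hline (measurableSet_toMeasurable μ B))]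
    have hslice (t : ℝ) : μ ((· + t • v) ⁻¹' toMeasurable μ B) = 0 := by
      rw [measure_preimage_add_right, measure_toMeasurable, hB]
    simp only [preimage_preimage]
    exact (lintegral_congr hslice).trans lintegral_zero
  filter_upwards [Measure.ae_ae_of_ae_prod (measure_eq_zero_iff_ae_notMem.1 hnull)] with w hw
  filter_upwards [hw] with t ht hmem
  exact ht (subset_toMeasurable μ B hmem)

theorem IsOpen.exists_mem_frontier_openSegment_subset {E : Type*} [AddCommGroup E] [Module ℝ E]
    [TopologicalSpace E] [IsTopologicalAddGroup E] [ContinuousSMul ℝ E] {Ω : Set E}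
    (hΩ : IsOpen Ω) {x y : E} (hx : x ∈ Ω) (hy : y ∉ Ω) :
    ∃ t ∈ Ioc (0 : ℝ) 1, x + t • (y - x) ∈ frontier Ω ∧
      openSegment ℝ x (x + t • (y - x)) ⊆ Ω := by
  set φ : ℝ → E := fun t => x + t • (y - x)
  have hφ : Continuous φ := by fun_prop
  set T := Icc (0 : ℝ) 1 ∩ φ ⁻¹' Ωᶜ
  have hTclosed : IsClosed T := isClosed_Icc.inter (hΩ.isClosed_compl.preimage hφ)
  have h1T : (1 : ℝ) ∈ T := ⟨right_mem_Icc.2 zero_le_one, by simpa [φ] using hy⟩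
  have hTbdd : BddBelow T := ⟨0, fun t ht => ht.1.1⟩
  obtain ⟨⟨ht₀, ht₁⟩, hφt⟩ := hTclosed.csInf_mem ⟨1, h1T⟩ hTbdd
  set t := sInf T
  have hbefore : ∀ s ∈ Ico 0 t, φ s ∈ Ω := fun s hs => by
    by_contra hs'
    exact (csInf_le hTbdd ⟨⟨hs.1, hs.2.le.trans ht₁⟩, hs'⟩).not_gt hs.2
  have htpos : 0 < t := ht₀.lt_of_ne fun h => hφt (by simpa [φ, ← h] using hx)
  refine ⟨t, ⟨htpos, ht₁⟩, ⟨?_, ?_⟩, ?_⟩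
  · show φ t ∈ closure Ω
    refine map_mem_closure hφ ?_ hbefore
    rw [closure_Ico htpos.ne]
    exact right_mem_Icc.2 ht₀
  · simpa [hΩ.interior_eq] using hφt
  · rintro _ ⟨a, b, ha, hb, hab, rfl⟩
    convert hbefore (b * t) ⟨by positivity, by nlinarith⟩ using 1
    obtain rfl : a = 1 - b := by linarith
    simp only [φ]
    module

section Polar

variable {N : ℕ} {K : Set (EuclideanSpace ℝ (Fin N))}

theorem polarSet_mem_nhds_zero (hK : Bornology.IsBounded K) :
    polarSet K ∈ 𝓝 (0 : EuclideanSpace ℝ (Fin N)) := by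
  obtain ⟨R, hR, hKR⟩ := hK.exists_pos_norm_le
  refine Metric.mem_nhds_iff.2 ⟨R⁻¹, inv_pos.2 hR, fun p hp x hx => ?_⟩
  rw [mem_ball_zero_iff] at hp
  calc ⟪p, x⟫ ≤ ‖p‖ * ‖x‖ := real_inner_le_norm p x
    _ ≤ R⁻¹ * R := mul_le_mul hp.le (hKR x hx) (norm_nonneg x) (by positivity)
    _ = 1 := inv_mul_cancel₀ hR.ne'

theorem inner_le_gauge_polarSet (hK : Bornology.IsBounded K) {p : EuclideanSpace ℝ (Fin N)}
    (hp : p ∈ K) (u : EuclideanSpace ℝ (Fin N)) : ⟪p, u⟫ ≤ gauge (polarSet K) u := by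
  rw [gauge_def]
  refine le_csInf (absorbent_nhds_zero (polarSet_mem_nhds_zero hK)).gauge_set_nonempty ?_
  rintro r ⟨hr, q, hq, rfl⟩
  rw [real_inner_smul_right, real_inner_comm]
  exact mul_le_of_le_one_right (mem_Ioi.1 hr).le (hq p hp)

theorem sub_le_gauge_polarSet_of_ae_gradient_mem (hK : Bornology.IsBounded K)
    {f : EuclideanSpace ℝ (Fin N) → ℝ} {C : ℝ≥0} {s : Set (EuclideanSpace ℝ (Fin N))}
    (hf : LipschitzOnWith C f s) {p v : EuclideanSpace ℝ (Fin N)}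
    (hs : ∀ t ∈ Icc (0 : ℝ) 1, p + t • v ∈ s)
    (hgrad : ∀ᵐ t : ℝ, t ∈ Icc (0 : ℝ) 1 →
      DifferentiableAt ℝ f (p + t • v) ∧ gradient f (p + t • v) ∈ K) :
    f (p + v) - f p ≤ gauge (polarSet K) v := by
  set g : ℝ → ℝ := fun t => f (p + t • v)
  have hline : LipschitzWith ‖v‖₊ fun t : ℝ => p + t • v :=
    LipschitzWith.of_dist_le_mul fun a b => by
      simp [dist_eq_norm, ← sub_smul, norm_smul, mul_comm]
  have hg : LipschitzOnWith (C * ‖v‖₊) g (Icc 0 1) :=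
    hf.comp hline.lipschitzOnWith hs
  have hderiv : ∀ᵐ t, t ∈ Icc (0 : ℝ) 1 → deriv g t ≤ gauge (polarSet K) v := by
    filter_upwards [hgrad] with t ht ht01
    obtain ⟨hdiff, hgradK⟩ := ht ht01
    have hline' : HasDerivAt (fun t : ℝ => p + t • v) v t := by
      simpa using ((hasDerivAt_id t).smul_const v).const_add p
    have hg' : HasDerivAt g (fderiv ℝ f (p + t • v) v) t :=
      hdiff.hasFDerivAt.comp_hasDerivAt t hline'
    rw [hg'.deriv, ← InnerProductSpace.toDual_symm_apply]
    exact inner_le_gauge_polarSet hK hgradK v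
  simpa [g] using hg.sub_le_mul_of_ae_deriv_le zero_le_one hderiv

end Polar

theorem LipschitzOnWith.ae_differentiableAt_and_gradient_mem {E : Type*}
    [NormedAddCommGroup E] [InnerProductSpace ℝ E] [FiniteDimensional ℝ E] [MeasurableSpace E]
    [BorelSpace E] (μ : Measure E) [μ.IsAddHaarMeasure] {f : E → ℝ} {C : ℝ≥0} {Ω K : Set E}
    (hΩ : IsOpen Ω) (hf : LipschitzOnWith C f Ω) (hgrad : ∀ᵐ x ∂(μ.restrict Ω), gradient f x ∈ K) :
    ∀ᵐ x ∂μ, x ∈ Ω → DifferentiableAt ℝ f x ∧ gradient f x ∈ K := by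
  rw [← ae_restrict_iff' hΩ.measurableSet]
  filter_upwards [hf.ae_differentiableWithinAt hΩ.measurableSet, hgrad,
    ae_restrict_mem hΩ.measurableSet] with x hdiff hxK hxΩ
  exact ⟨hdiff.differentiableAt (hΩ.mem_nhds hxΩ), hxK⟩

section Segments

variable {N : ℕ} {K Ω : Set (EuclideanSpace ℝ (Fin N))} {f : EuclideanSpace ℝ (Fin N) → ℝ}
  {C : ℝ≥0}

theorem sub_le_gauge_polarSet_of_segment_subset (hK : Bornology.IsBounded K) (hΩ : IsOpen Ω)
    (hf : LipschitzOnWith C f Ω)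
    (hgood : ∀ᵐ x, x ∈ Ω → DifferentiableAt ℝ f x ∧ gradient f x ∈ K)
    {p v : EuclideanSpace ℝ (Fin N)} (hseg : ∀ t ∈ Icc (0 : ℝ) 1, p + t • v ∈ Ω) :
    f (p + v) - f p ≤ gauge (polarSet K) v := by
  obtain ⟨δ, hδ, hthick⟩ := (isCompact_Icc.image (by fun_prop : Continuous fun t : ℝ => p + t • v)
    ).exists_thickening_subset_open hΩ (by rintro _ ⟨t, ht, rfl⟩; exact hseg t ht)
  have hnear (w) (hw : ‖w‖ < δ) (t) (ht : t ∈ Icc (0 : ℝ) 1) : p + w + t • v ∈ Ω :=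
    hthick (Metric.mem_thickening_iff.2 ⟨p + t • v, ⟨t, ht, rfl⟩, by
      rwa [dist_eq_norm, show p + w + t • v - (p + t • v) = w by abel]⟩)
  -- Almost every line parallel to `v` meets the set where `f` is not differentiable with
  -- gradient in `K` in a null set of parameters; pick such a line close to the given one.
  set B := {x | ¬(x ∈ Ω → DifferentiableAt ℝ f x ∧ gradient f x ∈ K)}
  have hB : volume ((p + ·) ⁻¹' B) = 0 := by rw [measure_preimage_add]; exact hgood
  have hdense := Measure.dense_of_ae (ae_ae_add_smul_notMem hB v)
  refine le_of_forall_mem_Ioo_le_add_mul hδ (k := 2 * C) fun r hr => ?_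
  obtain ⟨w, hwline, hw⟩ := hdense.exists_mem_open Metric.isOpen_ball
    ⟨0, Metric.mem_ball_self hr.1⟩
  rw [mem_ball_zero_iff] at hw
  have hwδ := hw.trans hr.2
  have hparallel := sub_le_gauge_polarSet_of_ae_gradient_mem hK hf (hnear w hwδ) <| by
    filter_upwards [hwline] with t ht ht01
    simp only [B, mem_preimage, mem_ofPred_eq, not_not, ← add_assoc] at ht
    exact ht (hnear w hwδ t ht01)
  have hend : p + v ∈ Ω := by simpa using hseg 1 (right_mem_Icc.2 zero_le_one)
  have hstart : p ∈ Ω := by simpa using hseg 0 (left_mem_Icc.2 zero_le_one)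
  have hend' : p + w + v ∈ Ω := by simpa using hnear w hwδ 1 (right_mem_Icc.2 zero_le_one)
  have hstart' : p + w ∈ Ω := by simpa using hnear w hwδ 0 (left_mem_Icc.2 zero_le_one)
  have h₁ := hf.le_add_mul hend hend'
  have h₂ := hf.le_add_mul hstart' hstart
  rw [dist_eq_norm, show p + v - (p + w + v) = -w by abel, norm_neg] at h₁
  rw [dist_eq_norm, add_sub_cancel_left] at h₂
  nlinarith [mul_le_mul_of_nonneg_left hw.le C.coe_nonneg]

theorem sub_le_gauge_polarSet_of_openSegment_subset (hK : Bornology.IsBounded K)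
    (hΩ : IsOpen Ω) (hf : LipschitzOnWith C f (closure Ω))
    (hgood : ∀ᵐ x, x ∈ Ω → DifferentiableAt ℝ f x ∧ gradient f x ∈ K)
    {a b : EuclideanSpace ℝ (Fin N)} (ha : a ∈ closure Ω) (hb : b ∈ closure Ω)
    (hab : openSegment ℝ a b ⊆ Ω) :
    f b - f a ≤ gauge (polarSet K) (b - a) := by
  refine le_of_forall_mem_Ioo_le_add_mul (by norm_num : (0 : ℝ) < 1 / 2)
    (k := 2 * C * ‖b - a‖) fun ε ⟨hε₀, hε₁⟩ => ?_
  have hmem (s) (hs : s ∈ Ioo (0 : ℝ) 1) : a + s • (b - a) ∈ Ω :=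
    hab (openSegment_eq_image' ℝ a b ▸ ⟨s, hs, rfl⟩)
  set p := a + ε • (b - a)
  set v := (1 - 2 * ε) • (b - a)
  have hinner : f (p + v) - f p ≤ gauge (polarSet K) v :=
    sub_le_gauge_polarSet_of_segment_subset hK hΩ (hf.mono subset_closure) hgood
      fun t ⟨ht₀, ht₁⟩ => by
        convert hmem (ε + t * (1 - 2 * ε)) ⟨by nlinarith, by nlinarith⟩ using 1
        simp only [p, v]
        module
  have hgauge : gauge (polarSet K) v ≤ gauge (polarSet K) (b - a) := by
    rw [gauge_smul_of_nonneg (by linarith), smul_eq_mul]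
    nlinarith [gauge_nonneg (s := polarSet K) (b - a)]
  have hp : p ∈ closure Ω := subset_closure (hmem ε ⟨hε₀, by linarith⟩)
  have hpv : p + v ∈ closure Ω := subset_closure (by
    convert hmem (1 - ε) ⟨by linarith, by linarith⟩ using 1
    simp only [p, v]
    module)
  have h₁ := hf.le_add_mul hb hpv
  have h₂ := hf.le_add_mul hp ha
  rw [dist_eq_norm, show b - (p + v) = ε • (b - a) by simp only [p, v]; module, norm_smul,
    Real.norm_of_nonneg hε₀.le] at h₁
  rw [dist_eq_norm, show p - a = ε • (b - a) by simp only [p]; module, norm_smul,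
    Real.norm_of_nonneg hε₀.le] at h₂
  linarith

theorem le_add_mdist (hK : Bornology.IsBounded K) (hΩ : IsOpen Ω)
    (hfront : (frontier Ω).Nonempty) (hf : LipschitzOnWith C f (closure Ω))
    (hgood : ∀ᵐ x, x ∈ Ω → DifferentiableAt ℝ f x ∧ gradient f x ∈ K) {c₀ : ℝ}
    (hbc : ∀ y ∈ frontier Ω, f y ≤ c₀) {x : EuclideanSpace ℝ (Fin N)} (hx : x ∈ closure Ω) :
    f x ≤ c₀ + mdist K Ω x := by
  rw [← sub_le_iff_le_add']
  refine le_csInf (hfront.image _) ?_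
  rintro _ ⟨y, hy, rfl⟩
  have hgauge := gauge_nonneg (s := polarSet K) (x - y)
  by_cases hxΩ : x ∈ Ω
  · obtain ⟨t, ⟨ht₀, ht₁⟩, hz, hseg⟩ :=
      hΩ.exists_mem_frontier_openSegment_subset hxΩ (hΩ.frontier_eq ▸ hy).2
    have hxz : x - (x + t • (y - x)) = t • (x - y) := by module
    have := sub_le_gauge_polarSet_of_openSegment_subset hK hΩ hf hgood
      (frontier_subset_closure hz) hx (openSegment_symm ℝ _ x ▸ hseg)
    rw [hxz, gauge_smul_of_nonneg ht₀.le, smul_eq_mul] at this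
    nlinarith [hbc _ hz]
  · linarith [hbc x (hΩ.frontier_eq ▸ ⟨hx, hxΩ⟩)]

end Segments

theorem mdist_nonneg {N : ℕ} (K Ω : Set (EuclideanSpace ℝ (Fin N)))
    (x : EuclideanSpace ℝ (Fin N)) : 0 ≤ mdist K Ω x :=
  Real.sInf_nonneg <| by rintro _ ⟨y, -, rfl⟩; exact gauge_nonneg _

theorem mdistNeg_nonneg {N : ℕ} (K Ω : Set (EuclideanSpace ℝ (Fin N)))
    (x : EuclideanSpace ℝ (Fin N)) : 0 ≤ mdistNeg K Ω x :=
  Real.sInf_nonneg <| by rintro _ ⟨y, -, rfl⟩; exact gauge_nonneg _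

theorem truncation_recursion_eq_max {c : ℕ → ℝ} (hc : Monotone c) {a d d' : ℝ} (hd : 0 ≤ d)
    (hd' : 0 ≤ d') (ha : a ≤ c 0 + d) {u : ℕ → ℝ} (hu₀ : u 0 = a)
    (hu : ∀ i, u (i + 1) = min (max (u i) (c (i + 1) - d')) (c (i + 1) + d)) {i : ℕ}
    (hi : 1 ≤ i) : u i = max a (c i - d') := by
  have hupper (i : ℕ) : max a (c i - d') ≤ c i + d :=
    max_le (ha.trans (by linarith [hc (Nat.zero_le i)])) (by linarith)
  induction i, hi using Nat.le_induction with
  | base => rw [hu, hu₀, min_eq_left (hupper 1)]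
  | succ i _ ih =>
    rw [hu, ih, max_assoc, max_eq_right (sub_le_sub_right (hc i.le_succ) d'),
      min_eq_left (hupper _)]

theorem discrete_steps_formula_general (N : ℕ) (hN : 0 < N)
    (Ω : Set (EuclideanSpace ℝ (Fin N)))
    (hΩopen : IsOpen Ω) (hΩbdd : Bornology.IsBounded Ω) (hΩne : Ω.Nonempty)
    (K : Set (EuclideanSpace ℝ (Fin N)))
    (hKcomp : IsCompact K)
    (c : ℕ → ℝ) (hc : Monotone c)
    (h₀ : EuclideanSpace ℝ (Fin N) → ℝ) (C : ℝ≥0)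
    (hh₀ : LipschitzOnWith C h₀ (closure Ω))
    (hh₀K : ∀ᵐ x ∂(volume.restrict Ω), gradient h₀ x ∈ K)
    (hbc : ∀ y ∈ frontier Ω, h₀ y ≤ c 0)
    (hseq : ℕ → EuclideanSpace ℝ (Fin N) → ℝ)
    (hinit : hseq 0 = h₀)
    (hrec : ∀ i x, hseq (i + 1) x =
      min (max (hseq i x) (c (i + 1) - mdistNeg K Ω x)) (c (i + 1) + mdist K Ω x)) :
    ∀ i, 1 ≤ i → ∀ x ∈ closure Ω,
      hseq i x = max (h₀ x) (c i - mdistNeg K Ω x) := by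
  intro i hi x hx
  have : Nonempty (Fin N) := ⟨⟨0, hN⟩⟩
  have hfront : (frontier Ω).Nonempty :=
    nonempty_frontier_iff.2 ⟨hΩne, fun h => NormedSpace.unbounded_univ ℝ _ (h ▸ hΩbdd)⟩
  have hgood := (hh₀.mono subset_closure).ae_differentiableAt_and_gradient_mem volume hΩopen hh₀K
  have hupper := le_add_mdist hKcomp.isBounded hΩopen hfront hh₀ hgood hbc hx
  exact truncation_recursion_eq_max hc (mdist_nonneg K Ω x) (mdistNeg_nonneg K Ω x) hupper
    (u := fun i => hseq i x) (congrFun hinit x) (fun i => hrec i x) hi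

/-- for a nondecreasing sequence of external values `c i` and
`h₀ ∈ Lip_ρ(Ω)` with `h₀ ≤ c 0` on `∂Ω`, the recursion
`h_{i+1} = min(max(h_i, c_{i+1} − d_Ω⁻), c_{i+1} + d_Ω)` produces
`h_i = max(h₀, c i − d_Ω⁻)` at every step `i ≥ 1`: the upper truncation is never active. -/
theorem discrete_steps_formula (N : ℕ) (hN : 0 < N)
    (Ω : Set (EuclideanSpace ℝ (Fin N)))
    (hΩopen : IsOpen Ω) (hΩbdd : Bornology.IsBounded Ω) (hΩne : Ω.Nonempty)
    (hΩconn : IsConnected Ω) (hΩC2 : IsC2Domain Ω)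
    (K : Set (EuclideanSpace ℝ (Fin N)))
    (hKcomp : IsCompact K) (hKconv : Convex ℝ K)
    (hK0 : (0 : EuclideanSpace ℝ (Fin N)) ∈ interior K)
    (c : ℕ → ℝ) (hc : Monotone c)
    (h₀ : EuclideanSpace ℝ (Fin N) → ℝ) (C : ℝ≥0)
    (hh₀ : LipschitzOnWith C h₀ (closure Ω))
    (hh₀K : ∀ᵐ x ∂(volume.restrict Ω), gradient h₀ x ∈ K)
    (hbc : ∀ y ∈ frontier Ω, h₀ y ≤ c 0)
    (hseq : ℕ → EuclideanSpace ℝ (Fin N) → ℝ)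
    (hinit : hseq 0 = h₀)
    (hrec : ∀ i x, hseq (i + 1) x =
      min (max (hseq i x) (c (i + 1) - mdistNeg K Ω x)) (c (i + 1) + mdist K Ω x)) :
    ∀ i, 1 ≤ i → ∀ x ∈ closure Ω,
      hseq i x = max (h₀ x) (c i - mdistNeg K Ω x) :=
  discrete_steps_formula_general N hN Ω hΩopen hΩbdd hΩne K hKcomp c hc h₀ C hh₀ hh₀K hbc hseq hinit
    hrec
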